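/- Let X_0 = {a}, X_1, ..., X_k be the similarity layers of a symmetric matrix A rooted at a, and assume V = X_0 ∪ ... ∪ X_k. Then the last layer X_k is homogeneous for A; moreover, if X_k = {b} is a singleton, then b is critical for A. -/

import Mathlib

/-- The consecutive pairs of `l` avoid `z` with respect to the matrix `A`. -/
def AvoidChain {V : Type*} (A : V → V → ℝ) (z : V) (l : List V) : Prop :=
  l.Chain' fun u w => min (A u z) (A w z) < A u w

/-- `l` is a path from `x` to `y` avoiding `z` in `A`: a sequence of distinct
elements starting at `x`, ending at `y`, each consecutive pair avoiding `z`. -/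
def AvoidPath {V : Type*} (A : V → V → ℝ) (z x y : V) (l : List V) : Prop :=
  l.Nodup ∧ l.head? = some x ∧ l.getLast? = some y ∧ AvoidChain A z l

/-- `x ~^z y`: there is a path from `x` to `y` avoiding `z` in `A`. -/
def Avoids {V : Type*} (A : V → V → ℝ) (z x y : V) : Prop :=
  ∃ l, AvoidPath A z x y l

/-- `{x,y,z}` is a weighted asteroidal triple of `A`. -/
def IsWAT {V : Type*} (A : V → V → ℝ) (x y z : V) : Prop :=
  x ≠ y ∧ y ≠ z ∧ x ≠ z ∧ Avoids A z x y ∧ Avoids A x y z ∧ Avoids A y z x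

/-- `π` is a Robinson ordering of `A`. -/
def IsRobinsonOrdering {V : Type*} [Fintype V] (A : V → V → ℝ)
    (π : Fin (Fintype.card V) ≃ V) : Prop :=
  ∀ i j k : Fin (Fintype.card V), i < j → j < k →
    A (π i) (π k) ≤ min (A (π i) (π j)) (A (π j) (π k))

/-- `A` is Robinsonian: it admits a Robinson ordering. -/
def Robinsonian {V : Type*} [Fintype V] (A : V → V → ℝ) : Prop :=
  ∃ π : Fin (Fintype.card V) ≃ V, IsRobinsonOrdering A π

/-- `S` is strongly homogeneous for `A`. -/
def StronglyHomogeneous {V : Type*} [DecidableEq V] (A : V → V → ℝ) (S : Finset V) : Prop :=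
  ∀ x ∉ S, ∀ y ∈ S, ∀ z ∈ S, A x y = A x z ∧ A x y ≤ A y z

/-- `a` is critical for `A`: between any two distinct elements of `V \ {a}`
there is a path avoiding `a`. -/
def IsCritical {V : Type*} (A : V → V → ℝ) (a : V) : Prop :=
  ∀ x y : V, x ≠ a → y ≠ a → x ≠ y → Avoids A a x y

/-- The similarity layers of `A` rooted at `a`, together with the union of the
layers so far: `(simLayersAux A a n).1` is the `n`-th layer `X_n` and
`(simLayersAux A a n).2 = X_0 ∪ ⋯ ∪ X_n`. -/
def simLayersAux {V : Type*} (A : V → V → ℝ) (a : V) : ℕ → Set V × Set V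
  | 0 => ({a}, {a})
  | n + 1 =>
    let U := (simLayersAux A a n).2
    let L := { y | y ∉ U ∧ ∀ x ∈ U, ∀ z ∉ U, A x z ≤ A x y }
    (L, U ∪ L)

/-- The `n`-th similarity layer `X_n` of `A` rooted at `a`. -/
def simLayer {V : Type*} (A : V → V → ℝ) (a : V) (n : ℕ) : Set V :=
  (simLayersAux A a n).1

/-!
Every element of the last layer `X_k` maximises `A x ·` outside `X_0 ∪ ⋯ ∪ X_{k-1}` for each
earlier `x`, so all of them take the same value `A x y`; this is homogeneity.

For criticality of `X_k = {b}`, call a step `u w` good when `min (A u b) (A w b) < A u w`.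
If `v ∈ X_{m+1}` with `m + 1 < k`, then `b ∉ X_{m+1}` is witnessed by some `u ∈ X_0 ∪ ⋯ ∪ X_m`
and `z` outside it with `A u b < A u z ≤ A u v`, so `u v` is a good step. By induction on
the layer index every `v ≠ b` is joined to the root `a` by good steps, hence (by symmetry of `A`) any two such
elements are joined through `a`; cutting the cycles out of such a walk leaves a path avoiding `b`.
-/

def AvoidStep {V : Type*} (A : V → V → ℝ) (z u w : V) : Prop :=
  min (A u z) (A w z) < A u w

section Avoidance

variable {V : Type*} {A : V → V → ℝ} {z : V}

lemma avoidStep_symm (hsym : ∀ u v : V, A u v = A v u) : Std.Symm (AvoidStep A z) where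
  symm u w h := by
    rw [AvoidStep, min_comm, hsym w u]
    exact h

lemma Avoids.refl (x : V) : Avoids A z x x :=
  ⟨[x], List.nodup_singleton x, rfl, rfl, List.IsChain.singleton x⟩

/-- Prepending a step to a path: if `x` already lies on the path, cut the path at `x`. -/
lemma Avoids.head {x c y : V} (hxc : AvoidStep A z x c) (hcy : Avoids A z c y) :
    Avoids A z x y := by
  obtain ⟨l, hnd, hhead, hlast, hchain⟩ := hcy
  by_cases hx : x ∈ l
  · obtain ⟨l₁, l₂, rfl⟩ := List.append_of_mem hx
    refine ⟨x :: l₂, hnd.sublist (List.sublist_append_right _ _), rfl, ?_,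
      hchain.right_of_append⟩
    rwa [List.getLast?_append_of_ne_nil _ (List.cons_ne_nil _ _)] at hlast
  · obtain ⟨c, l, rfl⟩ : ∃ c' l', l = c' :: l' := List.ne_nil_iff_exists_cons.mp
      (by rintro rfl; simp at hhead)
    obtain rfl : c = _ := Option.some.inj hhead
    refine ⟨x :: c :: l, List.nodup_cons.mpr ⟨hx, hnd⟩, rfl, ?_,
      List.IsChain.cons_cons hxc hchain⟩
    rwa [List.getLast?_cons_cons]

lemma avoids_of_reflTransGen {x y : V} (h : Relation.ReflTransGen (AvoidStep A z) x y) :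
    Avoids A z x y := by
  induction h using Relation.ReflTransGen.head_induction_on with
  | refl => exact Avoids.refl y
  | head hxc _ ih => exact Avoids.head hxc ih

end Avoidance

section Layers

variable {V : Type*} (A : V → V → ℝ) (a : V)

lemma mem_simLayer_succ {y : V} {n : ℕ} :
    y ∈ simLayer A a (n + 1) ↔ y ∉ (simLayersAux A a n).2 ∧
      ∀ x ∈ (simLayersAux A a n).2, ∀ z ∉ (simLayersAux A a n).2, A x z ≤ A x y :=
  Iff.rfl

lemma mem_simLayersAux_snd_iff {v : V} {n : ℕ} :
    v ∈ (simLayersAux A a n).2 ↔ ∃ j ≤ n, v ∈ simLayer A a j := by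
  induction n with
  | zero => simp [simLayer, simLayersAux]
  | succ n ih =>
    rw [show (simLayersAux A a (n + 1)).2 = (simLayersAux A a n).2 ∪ simLayer A a (n + 1)
      from rfl, Set.mem_union, ih]
    constructor
    · rintro (⟨j, hj, hv⟩ | hv)
      · exact ⟨j, by omega, hv⟩
      · exact ⟨n + 1, le_rfl, hv⟩
    · rintro ⟨j, hj, hv⟩
      rcases Nat.lt_or_eq_of_le hj with hj | rfl
      · exact Or.inl ⟨j, by omega, hv⟩
      · exact Or.inr hv

lemma mem_simLayersAux_snd_of_mem_simLayer {v : V} {i n : ℕ} (hv : v ∈ simLayer A a i)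
    (hi : i ≤ n) : v ∈ (simLayersAux A a n).2 :=
  (mem_simLayersAux_snd_iff A a).mpr ⟨i, hi, hv⟩

variable {A a}

lemma notMem_simLayersAux_snd_of_mem_simLayer {b : V} {i k : ℕ} (hb : b ∈ simLayer A a k)
    (hi : i < k) : b ∉ (simLayersAux A a i).2 := by
  obtain ⟨n, rfl⟩ := Nat.exists_eq_add_one_of_ne_zero (Nat.ne_zero_of_lt hi)
  intro hbi
  obtain ⟨j, hj, hbj⟩ := (mem_simLayersAux_snd_iff A a).mp hbi
  exact hb.1 (mem_simLayersAux_snd_of_mem_simLayer A a hbj (by omega))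

lemma simLayer_succ_homogeneous {m : ℕ} {x y z : V} (hx : x ∈ (simLayersAux A a m).2)
    (hy : y ∈ simLayer A a (m + 1)) (hz : z ∈ simLayer A a (m + 1)) : A x y = A x z :=
  le_antisymm (hz.2 x hx y hy.1) (hy.2 x hx z hz.1)

lemma exists_avoidStep_of_mem_simLayer_succ {m : ℕ} {b v : V}
    (hb : b ∉ (simLayersAux A a (m + 1)).2) (hv : v ∈ simLayer A a (m + 1)) :
    ∃ u ∈ (simLayersAux A a m).2, AvoidStep A b u v := by
  have hbU : b ∉ (simLayersAux A a m).2 := fun h => hb (Set.mem_union_left _ h)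
  have hbX : b ∉ simLayer A a (m + 1) := fun h => hb (Set.mem_union_right _ h)
  simp only [mem_simLayer_succ, hbU, not_false_eq_true, true_and, not_forall, not_le] at hbX
  obtain ⟨u, hu, z, hz, hbz⟩ := hbX
  exact ⟨u, hu, (min_le_left _ _).trans_lt (hbz.trans_le (hv.2 u hu z hz))⟩

lemma reflTransGen_avoidStep_of_mem_simLayer {b : V} {k : ℕ} (hb : b ∈ simLayer A a k) :
    ∀ i < k, ∀ v ∈ simLayer A a i, Relation.ReflTransGen (AvoidStep A b) a v := by
  intro i
  induction i using Nat.strong_induction_on with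
  | _ i ih =>
    intro hik v hv
    cases i with
    | zero => exact (Set.mem_singleton_iff.mp hv) ▸ Relation.ReflTransGen.refl
    | succ m =>
      obtain ⟨u, hu, huv⟩ := exists_avoidStep_of_mem_simLayer_succ
        (notMem_simLayersAux_snd_of_mem_simLayer hb hik) hv
      obtain ⟨j, hj, huj⟩ := (mem_simLayersAux_snd_iff A a).mp hu
      exact (ih j (by omega) (by omega) u huj).tail huv

end Layers

theorem stmt_11_general {V : Type*} (A : V → V → ℝ)
    (hsym : ∀ u v : V, A u v = A v u) (a : V) (k : ℕ)
    (hcov : ∀ v : V, ∃ i ≤ k, v ∈ simLayer A a i) :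
    (∀ x ∉ simLayer A a k, ∀ y ∈ simLayer A a k, ∀ z ∈ simLayer A a k,
        A x y = A x z) ∧
    (∀ b : V, simLayer A a k = {b} → IsCritical A b) := by
  have earlier_layer : ∀ v ∉ simLayer A a k, ∃ i < k, v ∈ simLayer A a i := by
    intro v hv
    obtain ⟨i, hik, hvi⟩ := hcov v
    exact ⟨i, lt_of_le_of_ne hik (by rintro rfl; exact hv hvi), hvi⟩
  constructor
  · intro x hx y hy z hz
    obtain ⟨i, hik, hxi⟩ := earlier_layer x hx
    obtain ⟨m, rfl⟩ := Nat.exists_eq_add_one_of_ne_zero (Nat.ne_zero_of_lt hik)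
    exact simLayer_succ_homogeneous
      (mem_simLayersAux_snd_of_mem_simLayer A a hxi (by omega)) hy hz
  · intro b hb x y hx hy _
    have reach : ∀ v ≠ b, Relation.ReflTransGen (AvoidStep A b) a v := by
      intro v hv
      obtain ⟨i, hik, hvi⟩ := earlier_layer v (by rw [hb]; exact hv)
      exact reflTransGen_avoidStep_of_mem_simLayer (hb ▸ Set.mem_singleton b) i hik v hvi
    have := avoidStep_symm (z := b) hsym
    exact avoids_of_reflTransGen ((Std.Symm.symm _ _ (reach x hx)).trans (reach y hy))

theorem stmt_11 {V : Type*} (A : V → V → ℝ)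
    (hsym : ∀ u v : V, A u v = A v u) (a : V) (k : ℕ)
    (hne : (simLayer A a k).Nonempty)
    (hlast : ∀ j : ℕ, k < j → simLayer A a j = ∅)
    (hcov : ∀ v : V, ∃ i ≤ k, v ∈ simLayer A a i) :
    (∀ x ∉ simLayer A a k, ∀ y ∈ simLayer A a k, ∀ z ∈ simLayer A a k,
        A x y = A x z) ∧
    (∀ b : V, simLayer A a k = {b} → IsCritical A b) :=
  stmt_11_general A hsym a k hcov
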